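/- arXiv:1711.03405 — 4 statements merged into one kernel-verified Lean document; each statement's English description precedes it below -/
import Mathlib

section
/- For every integer k ≥ 2, the finite trigonometric sum Σ_{j=1}^{k-1} 1/sin²(jπ/k) equals (k² - 1)/3. -/
/-!
With `z = exp (2 i θ)` one has `1 / sin² θ = -4 z / (z - 1)²`. For a `k`-th root of unity
`z ≠ 1` the second-difference identity `(z - 1)² ∑_{m<k} m (k - m) z^m = 2 k z` turns this into
`1 / sin² (jπ/k) = -(2/k) ∑_{m<k} m (k - m) ζ^{mj}` with `ζ = exp (2πi/k)`. Summing over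
`1 ≤ j < k`, each geometric sum `∑_j ζ^{mj}` with `0 < m < k` equals `-1`, leaving
`(2/k) ∑_{m<k} m (k - m) = (k² - 1)/3`.
-/

open Finset Complex
open scoped Real

section Weights

variable {R : Type*} [CommRing R]

theorem sub_one_pow_three_mul_sum_range_mul_sub_mul_pow (c z : R) (n : ℕ) :
    (z - 1) ^ 3 * ∑ m ∈ range n, (m : R) * (c - m) * z ^ m
      = c * (z - 1) * ((n - 1) * z ^ (n + 1) - n * z ^ n + z)
        - ((n - 1) ^ 2 * z ^ (n + 2) - (2 * n ^ 2 - 2 * n - 1) * z ^ (n + 1) + n ^ 2 * z ^ n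
          - z ^ 2 - z) := by
  induction n with
  | zero => simp
  | succ n ih =>
    rw [sum_range_succ, mul_add, ih]
    push_cast
    ring

theorem six_mul_sum_range_mul_sub (c : R) (n : ℕ) :
    6 * ∑ m ∈ range n, (m : R) * (c - m) = 3 * c * n * (n - 1) - n * (n - 1) * (2 * n - 1) := by
  induction n with
  | zero => simp
  | succ n ih =>
    rw [sum_range_succ, mul_add, ih]
    push_cast
    ring

theorem sq_sub_one_mul_sum_range_mul_sub_mul_pow_of_pow_eq_one [IsDomain R] {z : R} {k : ℕ}
    (hzk : z ^ k = 1) (hz : z ≠ 1) :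
    (z - 1) ^ 2 * ∑ m ∈ range k, (m : R) * (k - m) * z ^ m = 2 * k * z := by
  refine mul_left_cancel₀ (sub_ne_zero.mpr hz) ?_
  have h := sub_one_pow_three_mul_sum_range_mul_sub_mul_pow (k : R) z k
  have hzk₁ : z ^ (k + 1) = z := by rw [pow_succ, hzk, one_mul]
  have hzk₂ : z ^ (k + 2) = z ^ 2 := by rw [pow_add, hzk, one_mul]
  rw [hzk₁, hzk₂, hzk] at h
  linear_combination h

end Weights

-- Both sides are `0` when `sin x = 0`.
theorem Complex.one_div_sin_sq_eq (x : ℂ) :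
    1 / sin x ^ 2 = -4 * exp (2 * x * I) / (exp (2 * x * I) - 1) ^ 2 := by
  have hexp : exp (2 * x * I) = exp (x * I) ^ 2 := by rw [← exp_nat_mul]; ring_nf
  have hinv : exp (-x * I) = (exp (x * I))⁻¹ := by rw [← exp_neg]; ring_nf
  rw [sin, hexp, hinv]
  have := exp_ne_zero (x * I)
  field_simp
  ring_nf
  rw [I_sq]
  ring

theorem sum_Ico_one_pow_eq_neg_one_of_pow_eq_one {K : Type*} [Field K] {x : K} {k : ℕ}
    (hk : k ≠ 0) (hxk : x ^ k = 1) (hx : x ≠ 1) : ∑ j ∈ Ico 1 k, x ^ j = -1 := by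
  have h := geom_sum_eq hx k
  rw [hxk, sub_self, zero_div, sum_range_eq_add_Ico _ (Nat.pos_of_ne_zero hk), pow_zero] at h
  linear_combination h

theorem one_div_sin_sq_nat_mul_pi_div_eq_sum {k j : ℕ} (hj : j ≠ 0) (hjk : j < k) :
    1 / sin (j * π / k) ^ 2
      = -(2 / k) * ∑ m ∈ range k, (m : ℂ) * (k - m) * (exp (2 * π * I / k) ^ m) ^ j := by
  have hk : (k : ℂ) ≠ 0 := by exact_mod_cast (by omega : k ≠ 0)
  have hζ : IsPrimitiveRoot (exp (2 * π * I / k)) k := isPrimitiveRoot_exp k (by omega)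
  have hexp : exp (2 * (j * π / k) * I) = exp (2 * π * I / k) ^ j := by
    rw [← exp_nat_mul]; ring_nf
  have hzk : (exp (2 * π * I / k) ^ j) ^ k = 1 := by rw [pow_right_comm, hζ.pow_eq_one, one_pow]
  have hz1 : exp (2 * π * I / k) ^ j ≠ 1 := hζ.pow_ne_one_of_pos_of_lt hj hjk
  have key := sq_sub_one_mul_sum_range_mul_sub_mul_pow_of_pow_eq_one hzk hz1
  simp only [pow_right_comm _ _ j]
  rw [Complex.one_div_sin_sq_eq, hexp, div_eq_iff (pow_ne_zero 2 (sub_ne_zero.mpr hz1))]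
  field_simp
  linear_combination 2 * key

/-- For every integer `k ≥ 2`, `∑_{j=1}^{k-1} 1/sin²(jπ/k) = (k² - 1)/3`. -/
theorem sum_inv_sin_sq (k : ℕ) (hk : 2 ≤ k) :
    ∑ j ∈ Finset.Ico 1 k, 1 / Real.sin ((j : ℝ) * Real.pi / k) ^ 2
      = ((k : ℝ) ^ 2 - 1) / 3 := by
  set ζ := exp (2 * π * I / k)
  have hζ : IsPrimitiveRoot ζ k := isPrimitiveRoot_exp k (by omega)
  have hk0 : (k : ℂ) ≠ 0 := by exact_mod_cast (by omega : k ≠ 0)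
  apply ofReal_injective
  push_cast
  calc ∑ j ∈ Ico 1 k, 1 / sin (j * π / k) ^ 2
      = ∑ j ∈ Ico 1 k, -(2 / k) * ∑ m ∈ range k, (m : ℂ) * (k - m) * (ζ ^ m) ^ j :=
        sum_congr rfl fun j hj =>
          one_div_sin_sq_nat_mul_pi_div_eq_sum (by grind) (mem_Ico.mp hj).2
    _ = -(2 / k) * ∑ m ∈ range k, (m : ℂ) * (k - m) * ∑ j ∈ Ico 1 k, (ζ ^ m) ^ j := by
        simp only [mul_sum]
        rw [sum_comm]
    _ = -(2 / k) * ∑ m ∈ range k, (m : ℂ) * (k - m) * (-1) := by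
        congr 1
        refine sum_congr rfl fun m hm => ?_
        rcases eq_or_ne m 0 with rfl | hm0
        · simp
        · rw [sum_Ico_one_pow_eq_neg_one_of_pow_eq_one (by omega)
            (by rw [pow_right_comm, hζ.pow_eq_one, one_pow])
            (hζ.pow_ne_one_of_pos_of_lt hm0 (mem_range.mp hm))]
    _ = ((k : ℂ) ^ 2 - 1) / 3 := by
        rw [← sum_mul]
        have := six_mul_sum_range_mul_sub (k : ℂ) k
        field_simp
        linear_combination this
end

section
/- For every integer k ≥ 2, the finite trigonometric sum Σ_{j=1}^{k-1} 1/sin⁴(jπ/k) equals (k⁴ - 1)/45 + 2(k² - 1)/9. -/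
/-!
With `z = exp (2θi)` one has `(1 - z)² = -4 sin² θ · z`, so `1 / sin⁴ θ = 16 z² / (1 - z)⁴`.
For `z ≠ 1` with `z ^ k = 1`, summation by parts against `z ^ i` turns `∑_{i<k} f(i) z^i` into
boundary terms `f(k) - f(0)` and the same sum for the forward difference `Δf`. Applied four times
to the quartic `w(x) = x(k - x)(x(k - x) + 2)`, for which `Δᵐw(k) - Δᵐw(0)` is `0, 0, 24k, 24k`
(`m = 0, …, 3`) and `Δ⁴w` is the constant `24`, this gives
`(1 - z)⁴ ∑_{i<k} w(i) z^i = -24k z²`. Summing over the nontrivial `k`-th roots of unity, the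
orthogonality of the powers of a primitive root leaves `-∑_{i<k} w(i) = -k(k² - 1)(k² + 11)/30`.
-/

open Finset fwdDiff

section SummationByParts

variable {R : Type*} [CommRing R]

theorem geom_sum_eq_zero_of_pow_eq_one [IsDomain R] {z : R} {k : ℕ} (hz : z ≠ 1)
    (hzk : z ^ k = 1) : ∑ i ∈ range k, z ^ i = 0 := by
  have h := geom_sum_mul z k
  rw [hzk, sub_self] at h
  exact (mul_eq_zero.1 h).resolve_right (sub_ne_zero.2 hz)

theorem sub_one_mul_sum_range_mul_pow {z : R} {k : ℕ} (hzk : z ^ k = 1) (f : R → R) :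
    (z - 1) * ∑ i ∈ range k, f i * z ^ i
      = f k - f 0 - z * ∑ i ∈ range k, Δ_[1] f i * z ^ i := by
  have h := sum_range_sub (fun i => f i * z ^ i) k
  simp only [hzk, Nat.cast_zero, pow_zero, mul_one] at h
  rw [← h, mul_sum, mul_sum, ← sum_sub_distrib]
  refine sum_congr rfl fun i _ => ?_
  simp only [fwdDiff, Nat.cast_succ]
  ring

def quarticWeight (k : ℕ) (x : R) : R := x * (k - x) * (x * (k - x) + 2)

theorem one_sub_pow_four_mul_sum_range_quarticWeight_mul_pow [IsDomain R] {z : R} {k : ℕ}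
    (hz : z ≠ 1) (hzk : z ^ k = 1) :
    (1 - z) ^ 4 * ∑ i ∈ range k, quarticWeight k (i : R) * z ^ i = -24 * k * z ^ 2 := by
  set w : R → R := quarticWeight k
  have boundary₀ : w k - w 0 = 0 := by
    simp [w, quarticWeight]
  have boundary₁ : (Δ_[1])^[1] w k - (Δ_[1])^[1] w 0 = 0 := by
    simp only [fwdDiff_iter_eq_sum_shift]; simp [w, sum_range_succ, quarticWeight]; ring
  have boundary₂ : (Δ_[1])^[2] w k - (Δ_[1])^[2] w 0 = 24 * k := by
    simp only [fwdDiff_iter_eq_sum_shift]; simp [w, sum_range_succ, quarticWeight, Nat.choose]; ring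
  have boundary₃ : (Δ_[1])^[3] w k - (Δ_[1])^[3] w 0 = 24 * k := by
    simp only [fwdDiff_iter_eq_sum_shift]; simp [w, sum_range_succ, quarticWeight, Nat.choose]; ring
  have fourth_diff (x : R) : (Δ_[1])^[4] w x = 24 := by
    simp only [fwdDiff_iter_eq_sum_shift]; simp [w, sum_range_succ, quarticWeight, Nat.choose]; ring
  have parts (m : ℕ) : (z - 1) * ∑ i ∈ range k, (Δ_[1])^[m] w i * z ^ i
      = (Δ_[1])^[m] w k - (Δ_[1])^[m] w 0 - z * ∑ i ∈ range k, (Δ_[1])^[m + 1] w i * z ^ i := by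
    rw [Function.iterate_succ_apply']
    exact sub_one_mul_sum_range_mul_pow hzk _
  have parts₀ := parts 0
  rw [Function.iterate_zero, id] at parts₀
  have sum_fourth_diff : ∑ i ∈ range k, (Δ_[1])^[4] w i * z ^ i = 0 := by
    simp [fourth_diff, ← mul_sum, geom_sum_eq_zero_of_pow_eq_one hz hzk]
  linear_combination (z - 1) ^ 3 * parts₀ - z * (z - 1) ^ 2 * parts 1
    + z ^ 2 * (z - 1) * parts 2 - z ^ 3 * parts 3 + z ^ 4 * sum_fourth_diff
    + (z - 1) ^ 3 * boundary₀ - z * (z - 1) ^ 2 * boundary₁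
    + z ^ 2 * (z - 1) * boundary₂ - z ^ 3 * boundary₃

theorem IsPrimitiveRoot.sum_Ico_sum_range_mul_pow_pow [IsDomain R] {ζ : R} {k : ℕ}
    (hζ : IsPrimitiveRoot ζ k) (f : ℕ → R) :
    ∑ j ∈ Ico 1 k, ∑ i ∈ range k, f i * (ζ ^ j) ^ i = k * f 0 - ∑ i ∈ range k, f i := by
  rcases Nat.eq_zero_or_pos k with rfl | hk
  · simp
  have orth (i : ℕ) (hi : i ∈ range k) :
      ∑ j ∈ range k, (ζ ^ j) ^ i = if i = 0 then (k : R) else 0 := by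
    simp_rw [← pow_mul, mul_comm _ i, pow_mul]
    split_ifs with h
    · simp [h]
    · refine geom_sum_eq_zero_of_pow_eq_one (hζ.pow_ne_one_of_pos_of_lt h (mem_range.1 hi)) ?_
      rw [← pow_mul, mul_comm, pow_mul, hζ.pow_eq_one, one_pow]
  have full : ∑ j ∈ range k, ∑ i ∈ range k, f i * (ζ ^ j) ^ i = k * f 0 := by
    rw [sum_comm]
    simp_rw [← mul_sum]
    rw [sum_congr rfl fun i hi => congrArg (f i * ·) (orth i hi)]
    simp [hk.ne', mul_comm]
  rw [← full, sum_range_eq_add_Ico _ hk]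
  simp

end SummationByParts

theorem sum_range_quarticWeight {K : Type*} [Field K] [CharZero K] (k : ℕ) :
    ∑ i ∈ range k, quarticWeight k (i : K) = k * (k ^ 2 - 1) * (k ^ 2 + 11) / 30 := by
  have partial_sum (n : ℕ) : ∑ i ∈ range n, quarticWeight k (i : K) = n * (n - 1) *
      ((k ^ 2 - 2) * (2 * n - 1) / 6 - k * n * (n - 1) / 2
        + (2 * n - 1) * (3 * n ^ 2 - 3 * n - 1) / 30 + k) := by
    induction n with
    | zero => simp
    | succ n ih => rw [sum_range_succ, ih, quarticWeight]; push_cast; ring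
  rw [partial_sum]
  ring

namespace Complex

theorem one_sub_exp_two_mul_mul_I_sq (θ : ℂ) :
    (1 - exp (2 * θ * I)) ^ 2 = -4 * sin θ ^ 2 * exp (2 * θ * I) := by
  have h : exp (θ * I) * exp (-θ * I) = 1 := by rw [← exp_add]; simp
  rw [sin, show 2 * θ * I = θ * I + θ * I by ring, exp_add]
  linear_combination (2 * exp (θ * I) ^ 2 - 1 - exp (θ * I) * exp (-θ * I)) * h
    + (exp (-θ * I) - exp (θ * I)) ^ 2 * exp (θ * I) ^ 2 * I_sq

theorem one_div_sin_pow_four (θ : ℂ) :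
    1 / sin θ ^ 4 = 16 * exp (2 * θ * I) ^ 2 / (1 - exp (2 * θ * I)) ^ 4 := by
  have h : (1 - exp (2 * θ * I)) ^ 4 = sin θ ^ 4 * (16 * exp (2 * θ * I) ^ 2) := by
    rw [show 4 = 2 * 2 from rfl, pow_mul, one_sub_exp_two_mul_mul_I_sq]
    ring
  rw [h, div_mul_cancel_right₀ (by simp [exp_ne_zero]), one_div]

end Complex

/-- For every integer `k ≥ 2`,
`∑_{j=1}^{k-1} 1/sin⁴(jπ/k) = (k⁴ - 1)/45 + 2(k² - 1)/9`. -/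
theorem sum_inv_sin_pow_four (k : ℕ) (hk : 2 ≤ k) :
    ∑ j ∈ Finset.Ico 1 k, 1 / Real.sin ((j : ℝ) * Real.pi / k) ^ 4
      = ((k : ℝ) ^ 4 - 1) / 45 + 2 * ((k : ℝ) ^ 2 - 1) / 9 := by
  have hk0 : k ≠ 0 := by omega
  have hζ := Complex.isPrimitiveRoot_exp k hk0
  set ζ := Complex.exp (2 * Real.pi * Complex.I / k)
  have inv_sin_pow_four_eq (j : ℕ) (hj : j ∈ Ico 1 k) :
      ((1 / Real.sin (j * Real.pi / k) ^ 4 : ℝ) : ℂ)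
        = -(2 / (3 * k)) * ∑ i ∈ range k, quarticWeight k (i : ℂ) * (ζ ^ j) ^ i := by
    obtain ⟨hj1, hjk⟩ := mem_Ico.1 hj
    have hz : ζ ^ j ≠ 1 := hζ.pow_ne_one_of_pos_of_lt (by omega) hjk
    have hzk : (ζ ^ j) ^ k = 1 := by rw [← pow_mul, mul_comm, pow_mul, hζ.pow_eq_one, one_pow]
    have hexp : Complex.exp (2 * (j * Real.pi / k : ℝ) * Complex.I) = ζ ^ j := by
      rw [← Complex.exp_nat_mul]; push_cast; ring_nf
    have hsub : 1 - ζ ^ j ≠ 0 := sub_ne_zero.2 (Ne.symm hz)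
    rw [Complex.ofReal_div, Complex.ofReal_one, Complex.ofReal_pow, Complex.ofReal_sin,
      Complex.one_div_sin_pow_four, hexp]
    field_simp
    linear_combination 2 * one_sub_pow_four_mul_sum_range_quarticWeight_mul_pow hz hzk
  apply Complex.ofReal_injective
  rw [Complex.ofReal_sum, sum_congr rfl inv_sin_pow_four_eq, ← mul_sum,
    hζ.sum_Ico_sum_range_mul_pow_pow, sum_range_quarticWeight]
  simp only [quarticWeight]
  push_cast
  field_simp
  ring
end

section
/- For every integer k ≥ 2, the finite trigonometric sum Σ_{j=1}^{k-1} 1/sin⁶(jπ/k) equals 2(k⁶ - 1)/945 + (k⁴ - 1)/45 + 8(k² - 1)/45. -/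
/-!
For a primitive `k`-th root of unity `ζ`, the numbers `a j = (ζ ^ j - 1)⁻¹`, `1 ≤ j < k`, are the
roots of `(1 + X) ^ k - X ^ k`. By Vieta their elementary symmetric functions are, up to sign,
binomial coefficients divided by `k`, and Newton's identities turn these into their power sums. For
`ζ = exp (2πi / k)` one has `1 / sin² (jπ / k) = -4 a j (a j + 1)`, so the sum of `1 / sin⁶` is a
fixed combination of the power sums of degrees `3` to `6`.
-/

open Finset Polynomial

theorem Finset.sum_pow_eq_mul_esymm_sub_sum {ι R : Type*} [CommRing R] (s : Finset ι)
    (f : ι → R) (m : ℕ) (hm : 0 < m) :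
    ∑ i ∈ s, f i ^ m = (-1) ^ (m + 1) * m * (s.val.map f).esymm m -
      ∑ a ∈ antidiagonal m with a.1 ∈ Set.Ioo 0 m,
        (-1) ^ a.1 * (s.val.map f).esymm a.1 * ∑ i ∈ s, f i ^ a.2 := by
  have h := congrArg (MvPolynomial.aeval fun i : s ↦ f i)
    (MvPolynomial.psum_eq_mul_esymm_sub_sum s R m hm)
  have hmap : s.attach.val.map (fun i : s ↦ f i) = s.val.map f := by
    rw [attach_val]
    conv_rhs => rw [← Multiset.attach_map_val s.val, Multiset.map_map]
    rfl
  have hsum (n : ℕ) : ∑ i ∈ s.attach, f i ^ n = ∑ i ∈ s, f i ^ n := sum_attach s (f · ^ n)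
  simp only [map_sub, map_mul, map_pow, map_neg, map_one, map_natCast, map_sum,
    MvPolynomial.aeval_esymm_eq_multiset_esymm, MvPolynomial.psum, MvPolynomial.aeval_X,
    univ_eq_attach, hmap, hsum] at h
  exact h

theorem Polynomial.coeff_one_add_X_pow_sub_X_pow {R : Type*} [CommRing R] (k i : ℕ) :
    ((1 + X : R[X]) ^ k - X ^ k).coeff i = if i < k then (k.choose i : R) else 0 := by
  rw [coeff_sub, coeff_one_add_X_pow, coeff_X_pow]
  rcases lt_trichotomy i k with h | rfl | h
  · simp [h, h.ne]
  · simp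
  · simp [Nat.choose_eq_zero_of_lt h, h.ne', h.not_gt]

theorem Polynomial.natDegree_one_add_X_pow_sub_X_pow_le {R : Type*} [CommRing R] (k : ℕ) :
    ((1 + X : R[X]) ^ k - X ^ k).natDegree ≤ k - 1 :=
  natDegree_le_iff_coeff_eq_zero.mpr fun i hi ↦ by
    rw [coeff_one_add_X_pow_sub_X_pow, if_neg (by omega)]

namespace IsPrimitiveRoot

variable {K : Type*} [Field K] {ζ : K} {k : ℕ}

theorem pow_sub_one_ne_zero_of_mem_Ico (hζ : IsPrimitiveRoot ζ k) {j : ℕ} (hj : j ∈ Ico 1 k) :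
    ζ ^ j - 1 ≠ 0 := by
  rw [mem_Ico] at hj
  exact sub_ne_zero.mpr (hζ.pow_ne_one_of_pos_of_lt (by omega) hj.2)

theorem roots_one_add_X_pow_sub_X_pow (hζ : IsPrimitiveRoot ζ k) :
    ((1 + X : K[X]) ^ k - X ^ k).roots = (Ico 1 k).val.map fun j ↦ (ζ ^ j - 1)⁻¹ := by
  rcases k.eq_zero_or_pos with rfl | hk
  · simp
  have hP : (1 + X : K[X]) ^ k - X ^ k ≠ 0 := fun h ↦ by
    have h0 := congrArg (coeff · 0) h
    simp only [coeff_one_add_X_pow_sub_X_pow, if_pos hk, Nat.choose_zero_right] at h0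
    simp at h0
  have hle : (Ico 1 k).val.map (fun j ↦ (ζ ^ j - 1)⁻¹) ≤ ((1 + X : K[X]) ^ k - X ^ k).roots := by
    rw [Multiset.le_iff_subset]
    · intro x hx
      obtain ⟨j, hj, rfl⟩ := Multiset.mem_map.mp hx
      rw [mem_roots hP, IsRoot, eval_sub, eval_pow, eval_pow, eval_add, eval_one, eval_X]
      have hroot : 1 + (ζ ^ j - 1)⁻¹ = ζ ^ j * (ζ ^ j - 1)⁻¹ := by
        field_simp [hζ.pow_sub_one_ne_zero_of_mem_Ico hj]
        ring
      rw [hroot, mul_pow, ← pow_mul, mul_comm j, pow_mul, hζ.pow_eq_one, one_pow, one_mul,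
        sub_self]
    · refine (Multiset.nodup_map_iff_inj_on (Ico 1 k).nodup).mpr fun i hi j hj h ↦ ?_
      rw [inv_inj, sub_left_inj] at h
      exact hζ.pow_inj (mem_Ico.mp hi).2 (mem_Ico.mp hj).2 h
  refine (Multiset.eq_of_le_of_card_le hle ?_).symm
  calc Multiset.card _ ≤ _ := card_roots' _
    _ ≤ k - 1 := natDegree_one_add_X_pow_sub_X_pow_le k
    _ = _ := by simp

theorem esymm_inv_pow_sub_one_mul (hζ : IsPrimitiveRoot ζ k) (r : ℕ) :
    ((Ico 1 k).val.map fun j ↦ (ζ ^ j - 1)⁻¹).esymm r * k = (-1) ^ r * k.choose (r + 1) := by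
  set P : K[X] := (1 + X) ^ k - X ^ k
  set s := (Ico 1 k).val.map fun j ↦ (ζ ^ j - 1)⁻¹
  have hroots : P.roots = s := hζ.roots_one_add_X_pow_sub_X_pow
  have hcard : Multiset.card s = k - 1 := by simp [s]
  have hdeg : P.natDegree = k - 1 :=
    le_antisymm (natDegree_one_add_X_pow_sub_X_pow_le k) (hcard ▸ hroots ▸ card_roots' P)
  rcases k.eq_zero_or_pos with rfl | hk
  · simp
  rcases le_or_gt r (k - 1) with hr | hr
  · have hvieta := coeff_eq_esymm_roots_of_card (hroots ▸ hcard.trans hdeg.symm)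
      (hdeg ▸ Nat.sub_le (k - 1) r)
    rw [leadingCoeff, hdeg, Nat.sub_sub_self hr, hroots] at hvieta
    simp only [P, coeff_one_add_X_pow_sub_X_pow, if_pos (show k - 1 - r < k by omega),
      if_pos (show k - 1 < k by omega), Nat.choose_one_right,
      Nat.choose_symm_of_eq_add (show k = k - 1 - r + (r + 1) by omega),
      Nat.choose_symm_of_eq_add (show k = k - 1 + 1 by omega)] at hvieta
    have hsq : ((-1 : K) ^ r) ^ 2 = 1 := by rw [← pow_mul, mul_comm, pow_mul]; simp
    linear_combination -(-1) ^ r * hvieta - s.esymm r * k * hsq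
  · rw [Multiset.esymm, Multiset.powersetCard_eq_empty r (by omega),
      Nat.choose_eq_zero_of_lt (by omega)]
    simp

variable [CharZero K]

theorem esymm_inv_pow_sub_one (hζ : IsPrimitiveRoot ζ k) (hk : k ≠ 0) (r : ℕ) :
    ((Ico 1 k).val.map fun j ↦ (ζ ^ j - 1)⁻¹).esymm r =
      (-1) ^ r * (descPochhammer K r).eval ((k : K) - 1) / (r + 1).factorial := by
  have h := hζ.esymm_inv_pow_sub_one_mul r
  rw [Nat.cast_choose_eq_descPochhammer_div, descPochhammer_succ_left, eval_mul, eval_X,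
    eval_comp, eval_sub, eval_X, eval_one] at h
  have hk' : (k : K) ≠ 0 := Nat.cast_ne_zero.mpr hk
  field_simp at h ⊢
  linear_combination h

theorem sum_inv_pow_sub_one_mul_add_one_pow_three (hζ : IsPrimitiveRoot ζ k) (hk : k ≠ 0) :
    ∑ j ∈ Ico 1 k, ((ζ ^ j - 1)⁻¹ * ((ζ ^ j - 1)⁻¹ + 1)) ^ 3 =
      -(2 * ((k : K) ^ 6 - 1) / 945 + ((k : K) ^ 4 - 1) / 45
        + 8 * ((k : K) ^ 2 - 1) / 45) / 64 := by
  set a : ℕ → K := fun j ↦ (ζ ^ j - 1)⁻¹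
  set e : ℕ → K := fun r ↦ ((Ico 1 k).val.map a).esymm r
  set p : ℕ → K := fun m ↦ ∑ j ∈ Ico 1 k, a j ^ m
  have he (r : ℕ) :
      e r = (-1) ^ r * (descPochhammer K r).eval ((k : K) - 1) / (r + 1).factorial :=
    hζ.esymm_inv_pow_sub_one hk r
  have newton (m : ℕ) (hm : 0 < m) : p m = (-1) ^ (m + 1) * m * e m -
      ∑ i ∈ antidiagonal m with i.1 ∈ Set.Ioo 0 m, (-1) ^ i.1 * e i.1 * p i.2 :=
    (Ico 1 k).sum_pow_eq_mul_esymm_sub_sum a m hm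
  have h1 := newton 1 (by norm_num)
  have h2 := newton 2 (by norm_num)
  have h3 := newton 3 (by norm_num)
  have h4 := newton 4 (by norm_num)
  have h5 := newton 5 (by norm_num)
  have h6 := newton 6 (by norm_num)
  norm_num [Nat.sum_antidiagonal_eq_sum_range_succ_mk, sum_filter, sum_range_succ, he,
    descPochhammer_succ_eval, Nat.factorial] at h1 h2 h3 h4 h5 h6
  have p1 : p 1 = -((k : K) - 1) / 2 := by linear_combination h1
  have p2 : p 2 = (-(k : K) ^ 2 + 6 * k - 5) / 12 := by
    rw [p1] at h2; linear_combination h2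
  have p3 : p 3 = ((k : K) ^ 2 - 4 * k + 3) / 8 := by
    rw [p1, p2] at h3; linear_combination h3
  have p4 : p 4 = ((k : K) ^ 4 - 110 * k ^ 2 + 360 * k - 251) / 720 := by
    rw [p1, p2, p3] at h4; linear_combination h4
  have p5 : p 5 = -((k : K) ^ 4 - 50 * k ^ 2 + 144 * k - 95) / 288 := by
    rw [p1, p2, p3, p4] at h5; linear_combination h5
  have p6 : p 6 = (-2 * (k : K) ^ 6 + 357 * k ^ 4 - 11508 * k ^ 2 + 30240 * k - 19087) / 60480 := by
    rw [p1, p2, p3, p4, p5] at h6; linear_combination h6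
  have hsum : ∑ j ∈ Ico 1 k, (a j * (a j + 1)) ^ 3 = p 3 + 3 * p 4 + 3 * p 5 + p 6 := by
    simp only [p, ← sum_add_distrib, mul_sum]
    exact sum_congr rfl fun j _ ↦ by ring
  rw [hsum, p3, p4, p5, p6]
  ring

theorem sum_neg_four_mul_pow_div_sq_pow_three (hζ : IsPrimitiveRoot ζ k) (hk : k ≠ 0) :
    ∑ j ∈ Ico 1 k, (-4 * ζ ^ j / (ζ ^ j - 1) ^ 2) ^ 3 =
      2 * ((k : K) ^ 6 - 1) / 945 + ((k : K) ^ 4 - 1) / 45 + 8 * ((k : K) ^ 2 - 1) / 45 := by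
  have hterm : ∀ j ∈ Ico 1 k, (-4 * ζ ^ j / (ζ ^ j - 1) ^ 2) ^ 3 =
      -64 * ((ζ ^ j - 1)⁻¹ * ((ζ ^ j - 1)⁻¹ + 1)) ^ 3 := fun j hj ↦ by
    field_simp [hζ.pow_sub_one_ne_zero_of_mem_Ico hj]
    ring
  rw [sum_congr rfl hterm, ← mul_sum, hζ.sum_inv_pow_sub_one_mul_add_one_pow_three hk]
  ring

end IsPrimitiveRoot

theorem Complex.inv_sin_sq (z : ℂ) :
    (sin z ^ 2)⁻¹ = -4 * exp (2 * z * I) / (exp (2 * z * I) - 1) ^ 2 := by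
  have h2 : exp (2 * z * I) = exp (z * I) ^ 2 := by rw [← exp_nat_mul]; ring_nf
  have hsin : sin z = (exp (-z * I) - exp (z * I)) * I / 2 := rfl
  rw [h2, hsin, neg_mul, exp_neg]
  field_simp
  rw [I_sq]
  ring

/-- For every integer `k ≥ 2`,
`∑_{j=1}^{k-1} 1/sin⁶(jπ/k) = 2(k⁶ - 1)/945 + (k⁴ - 1)/45 + 8(k² - 1)/45`. -/
theorem sum_inv_sin_pow_six (k : ℕ) (hk : 2 ≤ k) :
    ∑ j ∈ Finset.Ico 1 k, 1 / Real.sin ((j : ℝ) * Real.pi / k) ^ 6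
      = 2 * ((k : ℝ) ^ 6 - 1) / 945 + ((k : ℝ) ^ 4 - 1) / 45
        + 8 * ((k : ℝ) ^ 2 - 1) / 45 := by
  set ζ := Complex.exp (2 * Real.pi * Complex.I / k)
  have hterm (j : ℕ) : ((1 / Real.sin (j * Real.pi / k) ^ 6 : ℝ) : ℂ) =
      (-4 * ζ ^ j / (ζ ^ j - 1) ^ 2) ^ 3 := by
    have harg : (j : ℂ) * (2 * Real.pi * Complex.I / k) =
        2 * ((j * Real.pi / k : ℝ) : ℂ) * Complex.I := by
      push_cast
      ring
    rw [← Complex.exp_nat_mul, harg, ← Complex.inv_sin_sq]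
    push_cast
    ring
  apply Complex.ofReal_injective
  rw [Complex.ofReal_sum, sum_congr rfl fun j _ ↦ hterm j,
    (Complex.isPrimitiveRoot_exp k (by omega)).sum_neg_four_mul_pow_div_sq_pow_three (by omega)]
  push_cast
  ring
end

section
/- Let Ω be a simply connected Euclidean polygon with M ≥ 3 interior angles γ₁, ..., γ_M ∈ (0, 2π] satisfying Σᵢ γᵢ = (M−2)π. Then the heat invariant c₀ := Σ_{i=1}^M (π² − γᵢ²)/(24π·γᵢ) satisfies c₀ > 1/6, and moreover M ≥ 1 + 6c₀/(6c₀ − 1). -/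
/-- For a simply connected Euclidean polygon with `M ≥ 3` angles `γᵢ ∈ (0, 2π]` summing to
`(M−2)π`, the heat invariant `c₀ = Σᵢ (π² − γᵢ²)/(24π·γᵢ)` satisfies `c₀ > 1/6`, and
moreover `M ≥ 1 + 6c₀/(6c₀ − 1)`. -/
theorem heat_invariant_polygon_bound (M : ℕ) (hM : 3 ≤ M) (γ : Fin M → ℝ)
    (hγ : ∀ i, γ i ∈ Set.Ioc (0 : ℝ) (2 * Real.pi))
    (hsum : ∑ i, γ i = ((M : ℝ) - 2) * Real.pi) :
    1 / 6 < ∑ i, (Real.pi ^ 2 - γ i ^ 2) / (24 * Real.pi * γ i) ∧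
    (M : ℝ) ≥ 1 + 6 * (∑ i, (Real.pi ^ 2 - γ i ^ 2) / (24 * Real.pi * γ i)) /
      (6 * (∑ i, (Real.pi ^ 2 - γ i ^ 2) / (24 * Real.pi * γ i)) - 1) := by
  have hπ := Real.pi_pos
  have hπ0 : Real.pi ≠ 0 := ne_of_gt hπ
  have hM3 : (3 : ℝ) ≤ (M : ℝ) := by exact_mod_cast hM
  set c := ∑ i, (Real.pi ^ 2 - γ i ^ 2) / (24 * Real.pi * γ i) with hc
  -- Cauchy–Schwarz / AM–HM : M² ≤ (Σ γᵢ)(Σ 1/γᵢ)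
  have hCS : ((M : ℝ)) ^ 2 ≤ (∑ i, γ i) * ∑ i, 1 / γ i := by
    have := Finset.sum_sq_le_sum_mul_sum_of_sq_eq_mul (Finset.univ : Finset (Fin M))
      (r := fun _ => (1 : ℝ)) (f := fun i => γ i) (g := fun i => 1 / γ i)
      (fun i _ => (hγ i).1.le) (fun i _ => div_nonneg zero_le_one (hγ i).1.le)
      (fun i _ => by rw [one_pow, mul_one_div, div_self (ne_of_gt (hγ i).1)])
    simpa using this
  -- rewrite c
  have hterm : ∀ i, (Real.pi ^ 2 - γ i ^ 2) / (24 * Real.pi * γ i)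
      = Real.pi / 24 * (1 / γ i) - γ i / (24 * Real.pi) := by
    intro i
    have h := (hγ i).1
    field_simp
  have hcform : c = Real.pi / 24 * (∑ i, 1 / γ i) - ((M : ℝ) - 2) / 24 := by
    rw [hc]
    simp_rw [hterm]
    rw [Finset.sum_sub_distrib, ← Finset.mul_sum, ← Finset.sum_div, hsum]
    field_simp
  have hπS : Real.pi * ∑ i, 1 / γ i = 24 * c + ((M : ℝ) - 2) := by
    rw [hcform]; ring
  have hS' : ((M : ℝ)) ^ 2 ≤ ((M : ℝ) - 2) * (24 * c + ((M : ℝ) - 2)) := by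
    have h1 : (∑ i, γ i) * ∑ i, 1 / γ i
        = ((M : ℝ) - 2) * (Real.pi * ∑ i, 1 / γ i) := by rw [hsum]; ring
    rw [h1, hπS] at hCS
    exact hCS
  have hkey : (M : ℝ) - 1 ≤ 6 * c * ((M : ℝ) - 2) := by nlinarith [hS']
  have h1 : 1 / 6 < c := by nlinarith [hkey, hM3]
  refine ⟨h1, ?_⟩
  have h6c : 0 < 6 * c - 1 := by linarith
  have h2 : 6 * c / (6 * c - 1) ≤ (M : ℝ) - 1 := by
    rw [div_le_iff₀ h6c]
    nlinarith [hkey]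
  linarith
end
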